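/- arXiv:2009.04114 — 2 statements merged into one kernel-verified Lean document; each statement's English description precedes it below -/
import Mathlib

section
/- More generally, if f_0 = f_1 = 1 and f_m = f_{m-1} - γ·f_{m-2} for m ≥ 2 with 0 ≤ γ ≤ 1/4, then f is nonnegative, nonincreasing, and f_m ≤ (1-γ)^{m-1} for all m ≥ 1. -/
theorem stmt2 (γ : ℝ) (hγ0 : 0 ≤ γ) (hγ1 : γ ≤ 1 / 4)
    (f : ℕ → ℝ) (h0 : f 0 = 1) (h1 : f 1 = 1)
    (hrec : ∀ m, 2 ≤ m → f m = f (m - 1) - γ * f (m - 2)) :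
    (∀ m, 0 ≤ f m) ∧ (∀ m, f (m + 1) ≤ f m) ∧
      ∀ m, 1 ≤ m → f m ≤ (1 - γ) ^ (m - 1) := by
  have key : ∀ m, 0 ≤ f (m+1) ∧ f (m+1) ≤ f m ∧ f m ≤ 2 * f (m+1) := by
    intro m
    induction m with
    | zero => rw [h0, h1]; norm_num
    | succ n ih =>
      obtain ⟨h1', h2', h3'⟩ := ih
      have hr : f (n+2) = f (n+1) - γ * f n := by
        have := hrec (n+2) (by omega)
        simpa using this
      have hg : γ * f n ≤ (1/2) * f (n+1) := by nlinarith
      refine ⟨by nlinarith, by nlinarith, by nlinarith⟩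
  have bound : ∀ k, f (k+1) ≤ (1-γ)^k := by
    intro k
    induction k with
    | zero => simp [h1]
    | succ n ih =>
      have hr : f (n+2) = f (n+1) - γ * f n := by
        have := hrec (n+2) (by omega)
        simpa using this
      have hk := key n
      have h1γ : 0 ≤ 1 - γ := by linarith
      calc f (n+2) = f (n+1) - γ * f n := hr
        _ ≤ (1-γ) * f (n+1) := by nlinarith [hk.1, hk.2.1]
        _ ≤ (1-γ) * (1-γ)^n := by nlinarith
        _ = (1-γ)^(n+1) := by ring
  refine ⟨?_, fun m => (key m).2.1, ?_⟩
  · intro m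
    cases m with
    | zero => rw [h0]; norm_num
    | succ n => exact (key n).1
  · intro m hm
    obtain ⟨k, rfl⟩ := Nat.exists_eq_add_of_le hm
    simpa [add_comm] using bound k
end

section
/- Let 0 ≤ γ ≤ 1, Γ = (3+2γ)/(6+3γ), Δx(1) = 1/2, Δx(k) = 2^{-k}(1-γ)^{k-2}(1+γ) for k ≥ 2, Δα(1) = ((3+γ)/(6+3γ))Δx(1), Δα(k) = ((1+γ)/(2+γ))Δx(k) for k ≥ 2, and Δβ(k) = Δx(k) - Δα(k). Then for all k ≥ 0: ∑_{ℓ=1}^{k} Δα(ℓ) + 2·Δβ(k+1) = Γ. -/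
/-
With `Δβ(k) = Δx(k) / (2 + γ)` for `k ≥ 2` and `Δx(k + 1) = (1 - γ)/2 · Δx(k)`, one checks
`Δα(k) + 2 Δβ(k + 1) = 2 Δβ(k)` for every `k ≥ 1`. Hence the left-hand side does not depend on `k`,
and at `k = 0` it equals `2 Δβ(1) = Γ`.
-/

noncomputable def dx (γ : ℝ) (k : ℕ) : ℝ :=
  if k = 1 then 1 / 2 else (1 / 2) ^ k * (1 - γ) ^ (k - 2) * (1 + γ)

noncomputable def da (γ : ℝ) (k : ℕ) : ℝ :=
  if k = 1 then ((3 + γ) / (6 + 3 * γ)) * dx γ 1 else ((1 + γ) / (2 + γ)) * dx γ k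

noncomputable def db (γ : ℝ) (k : ℕ) : ℝ := dx γ k - da γ k

theorem Finset.sum_Icc_one_add_eq_of_telescoping {M : Type*} [AddCommMonoid M] (f g : ℕ → M)
    (h : ∀ ℓ, 1 ≤ ℓ → f ℓ + g (ℓ + 1) = g ℓ) (k : ℕ) :
    ∑ ℓ ∈ Finset.Icc 1 k, f ℓ + g (k + 1) = g 1 := by
  induction k with
  | zero => simp
  | succ k ih =>
    rw [Finset.sum_Icc_succ_top (by omega), add_assoc, h (k + 1) (by omega), ih]

theorem dx_two (γ : ℝ) : dx γ 2 = (1 + γ) / 4 := by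
  norm_num [dx]
  ring

theorem dx_succ_of_two_le (γ : ℝ) {k : ℕ} (hk : 2 ≤ k) : dx γ (k + 1) = (1 - γ) / 2 * dx γ k := by
  obtain ⟨m, rfl⟩ := Nat.exists_eq_add_of_le hk
  simp only [dx, show 2 + m + 1 ≠ 1 by omega, show 2 + m ≠ 1 by omega, if_false,
    show 2 + m + 1 - 2 = m + 1 by omega, show 2 + m - 2 = m by omega]
  ring

theorem two_mul_db_one (γ : ℝ) (hγ : 6 + 3 * γ ≠ 0) : 2 * db γ 1 = (3 + 2 * γ) / (6 + 3 * γ) := by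
  simp only [db, da, dx, if_true]
  field_simp
  ring

theorem db_of_ne_one (γ : ℝ) (hγ : 2 + γ ≠ 0) {k : ℕ} (hk : k ≠ 1) : db γ k = dx γ k / (2 + γ) := by
  simp only [db, da, if_neg hk]
  field_simp
  ring

theorem da_add_two_mul_db_succ (γ : ℝ) (hγ : 2 + γ ≠ 0) {k : ℕ} (hk : 1 ≤ k) :
    da γ k + 2 * db γ (k + 1) = 2 * db γ k := by
  rw [db_of_ne_one γ hγ (by omega : k + 1 ≠ 1)]
  rcases hk.eq_or_lt with rfl | hk
  · have h3 : 6 + 3 * γ ≠ 0 := by contrapose! hγ; linarith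
    rw [dx_two, two_mul_db_one γ h3]
    simp only [da, dx, if_true]
    field_simp
    ring
  · rw [dx_succ_of_two_le γ hk, db_of_ne_one γ hγ hk.ne', da, if_neg hk.ne']
    field_simp
    ring

theorem stmt9_general (γ : ℝ) (h0 : 0 ≤ γ) (k : ℕ) :
    ∑ ℓ ∈ Finset.Icc 1 k, da γ ℓ + 2 * db γ (k + 1) = (3 + 2 * γ) / (6 + 3 * γ) := by
  rw [Finset.sum_Icc_one_add_eq_of_telescoping (da γ) (fun ℓ => 2 * db γ ℓ)
    (fun ℓ hℓ => da_add_two_mul_db_succ γ (by linarith) hℓ) k]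
  exact two_mul_db_one γ (by linarith)

theorem stmt9 (γ : ℝ) (h0 : 0 ≤ γ) (h1 : γ ≤ 1) (k : ℕ) :
    ∑ ℓ ∈ Finset.Icc 1 k, da γ ℓ + 2 * db γ (k + 1) = (3 + 2 * γ) / (6 + 3 * γ) :=
  stmt9_general γ h0 k
end
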